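/- Let m be a positive integer. If every countable ultrahomogeneous metric space with all distances in [0,1]_{2(m²+m)} into which every countable metric space with distances in [0,1]_{2(m²+m)} embeds isometrically is 1/(2(m²+m))-indivisible, then every countable ultrahomogeneous metric space S_m with all distances in [0,1]_m into which every countable metric space with distances in [0,1]_m embeds isometrically is indivisible. -/

import Mathlib

/-!
Write `M = 2(m² + m)`. Rescaled by `(2m+1)/(2(m+1))`, the space `S_m` embeds in `T = S_M`, distance
`k/m` becoming `k(2m+1)/M`. Conversely, rounding `p/M` to `min(m, ⌈p/(2m+3)⌉)/m` is monotone and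
subadditive, so it turns `T` into a metric space with distances in `[0,1]_m`, which embeds in `S_m`.
Pull a colouring of `S_m` back to `T` along this map. By `1/M`-indivisibility some isometric copy
of `T` has all its points `1/M`-close to one colour class; moving the points of the rescaled `S_m`
inside that copy to nearby points of the class changes distances `k(2m+1)/M` by at most `2/M`, and
the rounding sends all of `[k(2m+1) - 2, k(2m+1) + 2]/M` back to `k/m`. The image in `S_m` is a
monochromatic isometric copy of `S_m`.

The spaces `S_N` exist: enumerate all finite one-point extension requests with integer distances
on `ℕ` and let the point `n` realise the Katětov extension of the request it codes. The resulting
space has the extension property, and universality and ultrahomogeneity follow by back and forth.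
-/

open Metric

/-- A metric space is ultrahomogeneous if every isometry between two finite
subspaces extends to a surjective self-isometry of the whole space. -/
def IsUltrahomogeneous (X : Type*) [MetricSpace X] : Prop :=
  ∀ F : Set X, F.Finite → ∀ φ : F → X, Isometry φ →
    ∃ ψ : X ≃ᵢ X, ∀ x : F, ψ x = φ x

/-- A metric space `X` is `ε`-indivisible if for every finite coloring there
is a color `i` and a subset `Y ⊆ X` isometric to `X` with every point of `Y`
within distance `ε` of the `i`-th color class. -/
def EpsIndivisible (X : Type*) [MetricSpace X] (ε : ℝ) : Prop :=
  ∀ k : ℕ, 0 < k → ∀ χ : X → Fin k, ∃ i : Fin k, ∃ e : X → X, Isometry e ∧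
    ∀ z : X, ∃ x : X, χ x = i ∧ dist (e z) x ≤ ε

/-- Approximate indivisibility (oscillation stability): `ε`-indivisible for
every `ε > 0`. -/
def ApproxIndivisible (X : Type*) [MetricSpace X] : Prop :=
  ∀ ε : ℝ, 0 < ε → EpsIndivisible X ε

/-- Exact indivisibility: some color class contains an isometric copy of `X`. -/
def Indivisible (X : Type*) [MetricSpace X] : Prop :=
  ∀ k : ℕ, 0 < k → ∀ χ : X → Fin k, ∃ i : Fin k, ∃ e : X → X, Isometry e ∧
    ∀ z : X, χ (e z) = i

/-- The Urysohn sphere: complete, separable, ultrahomogeneous, of diameter at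
most `1`, and universal for separable metric spaces of diameter at most `1`. -/
def IsUrysohnSphere (S : Type) [MetricSpace S] : Prop :=
  CompleteSpace S ∧ TopologicalSpace.SeparableSpace S ∧ IsUltrahomogeneous S ∧
  (∀ x y : S, dist x y ≤ 1) ∧
  ∀ (Y : Type) [MetricSpace Y], TopologicalSpace.SeparableSpace Y →
    (∀ a b : Y, dist a b ≤ 1) → ∃ f : Y → S, Isometry f

/-- The rational Urysohn sphere: countable, ultrahomogeneous, with distances in
`ℚ ∩ [0,1]`, universal for countable metric spaces with distances in `ℚ ∩ [0,1]`. -/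
def IsRationalUrysohnSphere (S : Type) [MetricSpace S] : Prop :=
  Countable S ∧ IsUltrahomogeneous S ∧
  (∀ x y : S, ∃ q : ℚ, 0 ≤ q ∧ q ≤ 1 ∧ dist x y = q) ∧
  ∀ (Y : Type) [MetricSpace Y], Countable Y →
    (∀ a b : Y, ∃ q : ℚ, 0 ≤ q ∧ q ≤ 1 ∧ dist a b = q) →
    ∃ f : Y → S, Isometry f

/-- `[0,1]_m = {k/m : 0 ≤ k ≤ m}`. -/
def distSetM (m : ℕ) : Set ℝ := {d | ∃ k : ℕ, k ≤ m ∧ d = (k : ℝ) / m}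

/-- The space `S_m`: countable, ultrahomogeneous, with distances in `[0,1]_m`,
universal for countable metric spaces with distances in `[0,1]_m`. -/
def IsUrysohnSphereM (m : ℕ) (S : Type) [MetricSpace S] : Prop :=
  Countable S ∧ IsUltrahomogeneous S ∧
  (∀ x y : S, dist x y ∈ distSetM m) ∧
  ∀ (Y : Type) [MetricSpace Y], Countable Y →
    (∀ a b : Y, dist a b ∈ distSetM m) → ∃ f : Y → S, Isometry f

def HasExtensionProperty (D : Set ℝ) (X : Type*) [MetricSpace X] : Prop :=
  ∀ P : Finset (X × ℝ), (∀ p ∈ P, p.2 ∈ D) →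
    (∀ p ∈ P, ∀ q ∈ P, p.2 ≤ q.2 + dist p.1 q.1 ∧ dist p.1 q.1 ≤ p.2 + q.2) →
    ∃ x, ∀ p ∈ P, dist x p.1 = p.2

theorem HasExtensionProperty.nonempty {D : Set ℝ} {X : Type*} [MetricSpace X]
    (hX : HasExtensionProperty D X) : Nonempty X :=
  let ⟨x, _⟩ := hX ∅ (by simp) (by simp)
  ⟨x⟩

section PartialIsometry

variable {X Y : Type*} [MetricSpace X] [MetricSpace Y]

def IsPartialIsometry (R : Set (Y × X)) : Prop :=
  ∀ p ∈ R, ∀ q ∈ R, dist p.1 q.1 = dist p.2 q.2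

namespace IsPartialIsometry

variable {R : Set (Y × X)}

theorem snd_eq (hR : IsPartialIsometry R) {y : Y} {x x' : X} (h : (y, x) ∈ R)
    (h' : (y, x') ∈ R) : x = x' :=
  dist_eq_zero.mp (by simpa using (hR _ h _ h').symm)

theorem swap (hR : IsPartialIsometry R) : IsPartialIsometry (Prod.swap ⁻¹' R) :=
  fun _ hp _ hq => (hR _ hp _ hq).symm

theorem insert (hR : IsPartialIsometry R) {y : Y} {x : X}
    (h : ∀ p ∈ R, dist y p.1 = dist x p.2) : IsPartialIsometry (insert (y, x) R) := by
  intro p hp q hq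
  rcases hp with rfl | hp <;> rcases hq with rfl | hq
  · simp
  · exact h q hq
  · rw [dist_comm, h p hp, dist_comm]
  · exact hR p hp q hq

theorem exists_isometry (hR : IsPartialIsometry R) (hdom : ∀ y, ∃ x, (y, x) ∈ R) :
    ∃ f : Y → X, Isometry f ∧ ∀ y, (y, f y) ∈ R := by
  choose f hf using hdom
  exact ⟨f, Isometry.of_dist_eq fun a b => (hR _ (hf a) _ (hf b)).symm, hf⟩

theorem exists_isometryEquiv (hR : IsPartialIsometry R) (hdom : ∀ y, ∃ x, (y, x) ∈ R)
    (hcod : ∀ x, ∃ y, (y, x) ∈ R) : ∃ f : Y ≃ᵢ X, ∀ y, (y, f y) ∈ R := by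
  obtain ⟨f, hf, hfR⟩ := hR.exists_isometry hdom
  have hsurj : Function.Surjective f := fun x =>
    let ⟨y, hy⟩ := hcod x
    ⟨y, hR.snd_eq (hfR y) hy⟩
  exact ⟨⟨Equiv.ofBijective f ⟨hf.injective, hsurj⟩, hf⟩, hfR⟩

theorem exists_insert_fst {D : Set ℝ} (hX : HasExtensionProperty D X)
    (hY : ∀ a b : Y, dist a b ∈ D) {P : Finset (Y × X)} (hP : IsPartialIsometry (P : Set (Y × X)))
    (y : Y) : ∃ x, IsPartialIsometry (Insert.insert (y, x) (P : Set (Y × X))) := by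
  classical
  let spheres := P.image fun p => (p.2, dist y p.1)
  have hD : ∀ s ∈ spheres, s.2 ∈ D := by
    simp only [spheres, Finset.mem_image]
    rintro _ ⟨p, -, rfl⟩
    exact hY _ _
  have hK : ∀ s ∈ spheres, ∀ s' ∈ spheres,
      s.2 ≤ s'.2 + dist s.1 s'.1 ∧ dist s.1 s'.1 ≤ s.2 + s'.2 := by
    simp only [spheres, Finset.mem_image]
    rintro _ ⟨p, hp, rfl⟩ _ ⟨q, hq, rfl⟩
    rw [← hP p hp q hq]
    exact ⟨dist_triangle_right _ _ _, dist_triangle_left _ _ _⟩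
  obtain ⟨x, hx⟩ := hX spheres hD hK
  exact ⟨x, hP.insert fun p hp => (hx (p.2, dist y p.1) (Finset.mem_image_of_mem _ hp)).symm⟩

theorem exists_insert_snd {D : Set ℝ} (hY : HasExtensionProperty D Y)
    (hX : ∀ a b : X, dist a b ∈ D) {P : Finset (Y × X)} (hP : IsPartialIsometry (P : Set (Y × X)))
    (x : X) : ∃ y, IsPartialIsometry (Insert.insert (y, x) (P : Set (Y × X))) := by
  classical
  have hP' : IsPartialIsometry ((P.image Prod.swap : Finset (X × Y)) : Set (X × Y)) := by
    simpa [Set.image_swap_eq_preimage_swap] using hP.swap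
  obtain ⟨y, hy⟩ := exists_insert_fst hY hX hP' x
  refine ⟨y, ?_⟩
  convert hy.swap using 1
  ext ⟨a, b⟩
  simp [Set.image_swap_eq_preimage_swap, and_comm]

end IsPartialIsometry

end PartialIsometry

section BackAndForth

variable {X Y : Type*} [MetricSpace X] [MetricSpace Y]

open scoped Classical in
noncomputable def growBy (P : Finset (Y × X)) (S : Set (Y × X)) : Finset (Y × X) :=
  if h : ∃ q ∈ S, IsPartialIsometry (insert q (P : Set (Y × X))) then insert h.choose P else P

theorem subset_growBy (P : Finset (Y × X)) (S : Set (Y × X)) : P ⊆ growBy P S := by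
  classical
  unfold growBy
  split_ifs
  exacts [Finset.subset_insert _ _, subset_rfl]

theorem IsPartialIsometry.growBy {P : Finset (Y × X)} (hP : IsPartialIsometry (P : Set (Y × X)))
    (S : Set (Y × X)) : IsPartialIsometry (growBy P S : Set (Y × X)) := by
  unfold _root_.growBy
  split_ifs with h
  · simpa using h.choose_spec.2
  · exact hP

theorem exists_mem_growBy {P : Finset (Y × X)} {S : Set (Y × X)}
    (h : ∃ q ∈ S, IsPartialIsometry (insert q (P : Set (Y × X)))) : ∃ q ∈ S, q ∈ growBy P S := by
  classical
  refine ⟨h.choose, h.choose_spec.1, ?_⟩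
  simp [growBy, h]

noncomputable def backAndForth (P₀ : Finset (Y × X)) (u : ℕ → Y) (v : ℕ → X) :
    ℕ → Finset (Y × X)
  | 0 => P₀
  | n + 1 => growBy (growBy (backAndForth P₀ u v n) {q | q.1 = u n}) {q | q.2 = v n}

variable {P₀ : Finset (Y × X)} (u : ℕ → Y) (v : ℕ → X)

theorem backAndForth_mono : Monotone (backAndForth P₀ u v) :=
  monotone_nat_of_le_succ fun _ =>
    (subset_growBy _ _).trans (subset_growBy _ _)

theorem isPartialIsometry_backAndForth (hP₀ : IsPartialIsometry (P₀ : Set (Y × X))) (n : ℕ) :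
    IsPartialIsometry (backAndForth P₀ u v n : Set (Y × X)) := by
  induction n with
  | zero => exact hP₀
  | succ n ih => exact (ih.growBy _).growBy _

theorem isPartialIsometry_iUnion_backAndForth (hP₀ : IsPartialIsometry (P₀ : Set (Y × X))) :
    IsPartialIsometry (⋃ n, (backAndForth P₀ u v n : Set (Y × X))) := by
  intro p hp q hq
  obtain ⟨i, hp⟩ := Set.mem_iUnion.mp hp
  obtain ⟨j, hq⟩ := Set.mem_iUnion.mp hq
  exact isPartialIsometry_backAndForth u v hP₀ (max i j)
    p (backAndForth_mono u v (le_max_left i j) hp) q (backAndForth_mono u v (le_max_right i j) hq)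

theorem exists_mem_backAndForth_fst {D : Set ℝ} (hX : HasExtensionProperty D X)
    (hY : ∀ a b : Y, dist a b ∈ D) (hP₀ : IsPartialIsometry (P₀ : Set (Y × X))) (n : ℕ) :
    ∃ x, (u n, x) ∈ backAndForth P₀ u v (n + 1) := by
  obtain ⟨x, hx⟩ := (isPartialIsometry_backAndForth u v hP₀ n).exists_insert_fst hX hY (u n)
  obtain ⟨⟨_, x'⟩, rfl, hx'⟩ := exists_mem_growBy (S := {q | q.1 = u n}) ⟨(u n, x), rfl, hx⟩
  exact ⟨x', subset_growBy _ _ hx'⟩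

theorem exists_mem_backAndForth_snd {D : Set ℝ} (hY : HasExtensionProperty D Y)
    (hX : ∀ a b : X, dist a b ∈ D) (hP₀ : IsPartialIsometry (P₀ : Set (Y × X))) (n : ℕ) :
    ∃ y, (y, v n) ∈ backAndForth P₀ u v (n + 1) := by
  have hP := (isPartialIsometry_backAndForth u v hP₀ n).growBy {q | q.1 = u n}
  obtain ⟨y, hy⟩ := hP.exists_insert_snd hY hX (v n)
  obtain ⟨⟨y', _⟩, rfl, hy'⟩ := exists_mem_growBy (S := {q | q.2 = v n}) ⟨(y, v n), rfl, hy⟩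
  exact ⟨y', hy'⟩

end BackAndForth

namespace HasExtensionProperty

variable {D : Set ℝ} {X : Type*} [MetricSpace X]

theorem exists_isometry (hX : HasExtensionProperty D X) {Y : Type*} [MetricSpace Y] [Countable Y]
    (hY : ∀ a b : Y, dist a b ∈ D) : ∃ f : Y → X, Isometry f := by
  rcases isEmpty_or_nonempty Y with hY₀ | hY₀
  · exact ⟨isEmptyElim, isometry_subsingleton⟩
  obtain ⟨u, hu⟩ := exists_surjective_nat Y
  have := hX.nonempty
  let v : ℕ → X := fun _ => Classical.arbitrary X
  have hP₀ : IsPartialIsometry ((∅ : Finset (Y × X)) : Set (Y × X)) := by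
    simp [IsPartialIsometry]
  obtain ⟨f, hf, -⟩ := (isPartialIsometry_iUnion_backAndForth u v hP₀).exists_isometry fun y => by
    obtain ⟨n, rfl⟩ := hu y
    obtain ⟨x, hx⟩ := exists_mem_backAndForth_fst u v hX hY hP₀ n
    exact ⟨x, Set.mem_iUnion.mpr ⟨n + 1, hx⟩⟩
  exact ⟨f, hf⟩

theorem isUltrahomogeneous (hX : HasExtensionProperty D X) [Countable X]
    (hD : ∀ a b : X, dist a b ∈ D) : IsUltrahomogeneous X := by
  intro F hF φ hφ
  have := hF.to_subtype
  have := hX.nonempty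
  obtain ⟨u, hu⟩ := exists_surjective_nat X
  let P₀ := (Set.finite_range fun x : F => ((x : X), φ x)).toFinset
  have hmem : ∀ x : F, ((x : X), φ x) ∈ P₀ := fun x => by simp [P₀]
  have hP₀ : IsPartialIsometry (P₀ : Set (X × X)) := by
    intro p hp q hq
    rw [Finset.mem_coe, Set.Finite.mem_toFinset] at hp hq
    obtain ⟨x, rfl⟩ := hp
    obtain ⟨y, rfl⟩ := hq
    exact (hφ.dist_eq x y).symm
  have hR := isPartialIsometry_iUnion_backAndForth u u hP₀
  obtain ⟨ψ, hψ⟩ := hR.exists_isometryEquiv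
    (fun y => by
      obtain ⟨n, rfl⟩ := hu y
      obtain ⟨x, hx⟩ := exists_mem_backAndForth_fst u u hX hD hP₀ n
      exact ⟨x, Set.mem_iUnion.mpr ⟨n + 1, hx⟩⟩)
    (fun x => by
      obtain ⟨n, rfl⟩ := hu x
      obtain ⟨y, hy⟩ := exists_mem_backAndForth_snd u u hX hD hP₀ n
      exact ⟨y, Set.mem_iUnion.mpr ⟨n + 1, hy⟩⟩)
  exact ⟨ψ, fun x => hR.snd_eq (hψ x) (Set.mem_iUnion.mpr ⟨0, hmem x⟩)⟩

end HasExtensionProperty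

def UrysohnSphereM (_N : ℕ) : Type := ℕ

namespace UrysohnSphereM

def katetovExt {ι : Type*} (N : ℕ) (A : Finset ι) (r a : ι → ℕ) (d : ℕ → ℕ → ℕ) (x : ℕ) : ℕ :=
  A.fold min N fun j => r j + d (a j) x

section KatetovExt

variable {ι : Type*} {N : ℕ} {A : Finset ι} {r a : ι → ℕ} {d : ℕ → ℕ → ℕ} {x y : ℕ}

theorem katetovExt_le_cap : katetovExt N A r a d x ≤ N :=
  (Finset.fold_min_le _).mpr (Or.inl le_rfl)

theorem katetovExt_le {j : ι} (hj : j ∈ A) : katetovExt N A r a d x ≤ r j + d (a j) x :=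
  (Finset.fold_min_le _).mpr (Or.inr ⟨j, hj, le_rfl⟩)

theorem le_katetovExt_iff {c : ℕ} :
    c ≤ katetovExt N A r a d x ↔ c ≤ N ∧ ∀ j ∈ A, c ≤ r j + d (a j) x :=
  Finset.le_fold_min _

theorem katetovExt_attained :
    N ≤ katetovExt N A r a d x ∨ ∃ j ∈ A, r j + d (a j) x ≤ katetovExt N A r a d x :=
  (Finset.fold_min_le _).mp le_rfl

theorem katetovExt_apply {j : ι} (hj : j ∈ A) (hd : d (a j) (a j) = 0) (hr : r j ≤ N)
    (hK : ∀ k ∈ A, r j ≤ r k + d (a k) (a j)) : katetovExt N A r a d (a j) = r j :=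
  le_antisymm ((katetovExt_le hj).trans_eq (by rw [hd, add_zero]))
    (le_katetovExt_iff.mpr ⟨hr, hK⟩)

theorem katetovExt_le_add {D : ℕ} (h : ∀ j ∈ A, d (a j) x ≤ d (a j) y + D) :
    katetovExt N A r a d x ≤ katetovExt N A r a d y + D := by
  obtain hy | ⟨j, hj, hy⟩ : N ≤ katetovExt N A r a d y ∨ _ := katetovExt_attained
  · exact katetovExt_le_cap.trans (hy.trans (Nat.le_add_right _ _))
  · have : katetovExt N A r a d x ≤ r j + d (a j) x := katetovExt_le hj
    have := h j hj
    omega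

theorem le_katetovExt_add {E : ℕ} (hE : E ≤ N)
    (h : ∀ j ∈ A, ∀ k ∈ A, E ≤ r j + d (a j) x + (r k + d (a k) y)) :
    E ≤ katetovExt N A r a d x + katetovExt N A r a d y := by
  obtain hx | ⟨j, hj, hx⟩ : N ≤ katetovExt N A r a d x ∨ _ := katetovExt_attained
  · omega
  obtain hy | ⟨k, hk, hy⟩ : N ≤ katetovExt N A r a d y ∨ _ := katetovExt_attained
  · omega
  have := h j hj k hk
  omega

end KatetovExt

/-- The point `n` asks for radii `(request n)[s]` around the points `s < (request n).length`. The
second coordinate of `n.unpair` is ignored, so every request is made by arbitrarily large `n`. -/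
def request (n : ℕ) : List ℕ := Denumerable.ofNat (List ℕ) n.unpair.1

def IsKatetov (N J : ℕ) (d : ℕ → ℕ → ℕ) (ψ : ℕ → ℕ) : Prop :=
  ∀ s < J, 1 ≤ ψ s ∧ ψ s ≤ N ∧ ∀ t < J, ψ s ≤ ψ t + d t s ∧ d s t ≤ ψ s + ψ t

theorem isKatetov_congr {N J : ℕ} {d d' : ℕ → ℕ → ℕ} {ψ ψ' : ℕ → ℕ}
    (hd : ∀ s < J, ∀ t < J, d s t = d' s t) (hψ : ∀ s < J, ψ s = ψ' s) :
    IsKatetov N J d ψ ↔ IsKatetov N J d' ψ' :=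
  forall₂_congr fun s hs => by
    simp only [hψ s hs]
    refine and_congr_right' (and_congr_right' (forall₂_congr fun t ht => ?_))
    rw [hψ t ht, hd t ht s hs, hd s hs t ht]

open scoped Classical in
noncomputable def admissibleLength (N n : ℕ) (d : ℕ → ℕ → ℕ) : ℕ :=
  if (request n).length ≤ n ∧ IsKatetov N (request n).length d ((request n).getD · 0) then
    (request n).length else 0

noncomputable def newRow (N n : ℕ) (d : ℕ → ℕ → ℕ) : ℕ → ℕ :=
  katetovExt N (Finset.range (admissibleLength N n d)) ((request n).getD · 0) id d

/-- For `i < n`, `row N n i` is `N` times the distance between `n` and `i`. The metric on the earlier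
points is handed to `newRow` as a total function, which makes the recursion visibly well founded. -/
noncomputable def row (N : ℕ) : ℕ → ℕ → ℕ
  | n => newRow N n fun x y => if _h : x ≠ y ∧ max x y < n then row N (max x y) (min x y) else 0
termination_by n => n
decreasing_by exact _h.2

noncomputable def natDist (N x y : ℕ) : ℕ := if x = y then 0 else row N (max x y) (min x y)

variable {N : ℕ}

theorem admissibleLength_le (n : ℕ) (d : ℕ → ℕ → ℕ) : admissibleLength N n d ≤ n := by
  unfold admissibleLength
  split_ifs with h
  exacts [h.1, Nat.zero_le n]

theorem isKatetov_admissibleLength (n : ℕ) (d : ℕ → ℕ → ℕ) :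
    IsKatetov N (admissibleLength N n d) d ((request n).getD · 0) := by
  unfold admissibleLength
  split_ifs with h
  exacts [h.2, fun s hs => absurd hs (Nat.not_lt_zero s)]

theorem newRow_congr {n i : ℕ} {d d' : ℕ → ℕ → ℕ} (h : ∀ x < n, ∀ y < n, d x y = d' x y)
    (hi : i < n) : newRow N n d i = newRow N n d' i := by
  have hsize : admissibleLength N n d = admissibleLength N n d' := by
    unfold admissibleLength
    congr 1
    exact propext (and_congr_right fun hJ => isKatetov_congr
      (fun s hs t ht => h s (hs.trans_le hJ) t (ht.trans_le hJ)) fun _ _ => rfl)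
  unfold newRow katetovExt
  rw [hsize]
  refine Finset.fold_congr fun s hs => ?_
  have := (Finset.mem_range.mp hs).trans_le (admissibleLength_le n d')
  simp only [id, h s this i hi]

theorem natDist_self (x : ℕ) : natDist N x x = 0 := if_pos rfl

theorem natDist_comm (x y : ℕ) : natDist N x y = natDist N y x := by
  unfold natDist
  rcases eq_or_ne x y with rfl | h
  · rfl
  · rw [if_neg h, if_neg h.symm, max_comm, min_comm]

theorem natDist_of_lt {x y : ℕ} (h : y < x) : natDist N x y = row N x y := by
  rw [natDist, if_neg h.ne', max_eq_left h.le, min_eq_right h.le]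

theorem row_eq {n i : ℕ} (hi : i < n) : row N n i = newRow N n (natDist N) i := by
  rw [row]
  refine newRow_congr (fun x hx y hy => ?_) hi
  unfold natDist
  rcases eq_or_ne x y with rfl | hxy
  · simp
  · rw [dif_pos ⟨hxy, max_lt hx hy⟩, if_neg hxy]

theorem natDist_le (x y : ℕ) : natDist N x y ≤ N := by
  unfold natDist
  split_ifs
  · exact Nat.zero_le N
  · rw [row]
    exact katetovExt_le_cap

theorem one_le_natDist [NeZero N] {x y : ℕ} (h : x ≠ y) : 1 ≤ natDist N x y := by
  rw [natDist, if_neg h, row]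
  refine le_katetovExt_iff.mpr ⟨NeZero.one_le, fun s hs => ?_⟩
  exact ((isKatetov_admissibleLength _ _ s (Finset.mem_range.mp hs)).1).trans (Nat.le_add_right _ _)

section Triangle

variable {n : ℕ}
  (htri : ∀ x < n, ∀ y < n, ∀ z < n, natDist N x z ≤ natDist N x y + natDist N y z)
include htri

theorem row_le_row_add {a b : ℕ} (ha : a < n) (hb : b < n) :
    row N n a ≤ row N n b + natDist N b a := by
  rw [row_eq ha, row_eq hb]
  refine katetovExt_le_add fun s hs => htri s ?_ b hb a ha
  exact (Finset.mem_range.mp hs).trans_le (admissibleLength_le n _)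

theorem natDist_le_row_add_row {a b : ℕ} (ha : a < n) (hb : b < n) :
    natDist N a b ≤ row N n a + row N n b := by
  rw [row_eq ha, row_eq hb]
  refine le_katetovExt_add (natDist_le a b) fun s hs t ht => ?_
  have hJ := admissibleLength_le (N := N) n (natDist N)
  rw [Finset.mem_range] at hs ht
  have hst := ((isKatetov_admissibleLength n _ s hs).2.2 t ht).2
  have h₁ := htri a ha s (hs.trans_le hJ) b hb
  have h₂ := htri s (hs.trans_le hJ) t (ht.trans_le hJ) b hb
  have h₃ := natDist_comm (N := N) a s
  simp only [id] at hst ⊢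
  omega

end Triangle

theorem natDist_triangle (x y z : ℕ) : natDist N x z ≤ natDist N x y + natDist N y z := by
  suffices h : ∀ n, ∀ x < n, ∀ y < n, ∀ z < n,
      natDist N x z ≤ natDist N x y + natDist N y z from
    h (x + y + z + 1) x (by omega) y (by omega) z (by omega)
  intro n
  induction n with
  | zero => intro x hx; omega
  | succ n ih =>
    intro x hx y hy z hz
    rcases eq_or_ne x y with rfl | hxy
    · simp [natDist_self]
    rcases eq_or_ne y z with rfl | hyz
    · simp [natDist_self]
    rcases eq_or_ne x z with rfl | hxz
    · simp [natDist_self]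
    rcases (Nat.lt_succ_iff.mp hx).lt_or_eq with hx | rfl
    · rcases (Nat.lt_succ_iff.mp hy).lt_or_eq with hy | rfl
      · rcases (Nat.lt_succ_iff.mp hz).lt_or_eq with hz | rfl
        · exact ih x hx y hy z hz
        · rw [natDist_comm x, natDist_comm y, natDist_of_lt hx, natDist_of_lt hy,
            natDist_comm x]
          have := row_le_row_add ih hx hy
          omega
      · rw [natDist_comm x y, natDist_of_lt hx, natDist_of_lt (by omega : z < y)]
        exact natDist_le_row_add_row ih hx (by omega)
    · rw [natDist_of_lt (by omega : z < x), natDist_of_lt (by omega : y < x)]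
      exact row_le_row_add ih (by omega) (by omega)

theorem exists_natDist_eq {J : ℕ} {ψ : ℕ → ℕ} (hψ : IsKatetov N J (natDist N) ψ) :
    ∃ n, ∀ s < J, natDist N n s = ψ s := by
  let l := List.ofFn fun s : Fin J => ψ s
  have hl : ∀ s < J, l.getD s 0 = ψ s := fun s hs => by simp [l, hs]
  let n := Nat.pair (Encodable.encode l) J
  have hreq : request n = l := by simp [request, n]
  have hJn : J ≤ n := Nat.right_le_pair _ _
  have hsize : admissibleLength N n (natDist N) = J := by
    have hK : IsKatetov N J (natDist N) (l.getD · 0) :=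
      (isKatetov_congr (fun _ _ _ _ => rfl) hl).mpr hψ
    have hlen : l.length = J := List.length_ofFn
    rw [admissibleLength, hreq, hlen, if_pos ⟨hJn, hK⟩]
  refine ⟨n, fun s hs => ?_⟩
  have hsn := hs.trans_le hJn
  rw [natDist_of_lt hsn, row_eq hsn, newRow, hsize, hreq, ← hl s hs]
  refine katetovExt_apply (a := id) (Finset.mem_range.mpr hs) (natDist_self s) ?_ fun t ht => ?_
  · exact (hl s hs).trans_le (hψ s hs).2.1
  · rw [Finset.mem_range] at ht
    simpa only [id, hl s hs, hl t ht] using ((hψ s hs).2.2 t ht).1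

variable [NeZero N]

theorem exists_natDist_eq_of_finset {ι : Type*} {P : Finset ι} {c q : ι → ℕ}
    (hq : ∀ p ∈ P, 1 ≤ q p ∧ q p ≤ N)
    (hK : ∀ p ∈ P, ∀ p' ∈ P,
      q p ≤ q p' + natDist N (c p') (c p) ∧ natDist N (c p) (c p') ≤ q p + q p') :
    ∃ n, ∀ p ∈ P, natDist N n (c p) = q p := by
  let ψ := katetovExt N P q c (natDist N)
  have hψ : IsKatetov N (P.sup c + 1) (natDist N) ψ := by
    refine fun s _ => ⟨le_katetovExt_iff.mpr ⟨NeZero.one_le, fun p hp => ?_⟩, katetovExt_le_cap,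
      fun t _ => ⟨katetovExt_le_add fun _ _ => natDist_triangle _ _ _,
        le_katetovExt_add (natDist_le s t) fun p hp p' hp' => ?_⟩⟩
    · exact (hq p hp).1.trans (Nat.le_add_right _ _)
    · have h₁ := natDist_triangle (N := N) s (c p) t
      have h₂ := natDist_triangle (N := N) (c p) (c p') t
      have h₃ := (hK p hp p' hp').2
      have h₄ := natDist_comm (N := N) s (c p)
      omega
  obtain ⟨n, hn⟩ := exists_natDist_eq hψ
  refine ⟨n, fun p hp => ?_⟩
  rw [hn (c p) (Nat.lt_succ_of_le (Finset.le_sup hp))]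
  exact katetovExt_apply hp (natDist_self _) (hq p hp).2 fun p' hp' => (hK p hp p' hp').1

noncomputable instance : MetricSpace (UrysohnSphereM N) where
  dist x y := (natDist N x y : ℝ) / N
  dist_self x := div_eq_zero_iff.mpr (Or.inl (by exact_mod_cast natDist_self x))
  dist_comm x y := by simp only [natDist_comm x y]
  dist_triangle x y z := by
    rw [← add_div]
    gcongr
    exact_mod_cast natDist_triangle x y z
  eq_of_dist_eq_zero {x y} h := by
    by_contra hxy
    have : (0 : ℝ) < natDist N x y / N := by
      have := one_le_natDist (N := N) hxy
      have := NeZero.pos N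
      positivity
    exact this.ne' h

instance : Countable (UrysohnSphereM N) := inferInstanceAs (Countable ℕ)

theorem dist_def (x y : UrysohnSphereM N) : dist x y = natDist N x y / N := rfl

theorem dist_mem_distSetM (x y : UrysohnSphereM N) : dist x y ∈ distSetM N :=
  ⟨natDist N x y, natDist_le x y, rfl⟩

theorem hasExtensionProperty : HasExtensionProperty (distSetM N) (UrysohnSphereM N) := by
  intro P hD hK
  by_cases h0 : ∃ p ∈ P, p.2 = 0
  · obtain ⟨p, hp, hp0⟩ := h0
    refine ⟨p.1, fun p' hp' => le_antisymm ?_ ?_⟩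
    · linarith [(hK p hp p' hp').2]
    · linarith [(hK p' hp' p hp).1, dist_comm p.1 p'.1]
  push Not at h0
  choose q hqN hq using fun p : P => hD p p.2
  have hN : (0 : ℝ) < N := Nat.cast_pos.mpr (NeZero.pos N)
  have hcast : ∀ a b c : ℕ, (a : ℝ) / N ≤ b / N + c / N ↔ a ≤ b + c := fun a b c => by
    rw [← add_div, div_le_div_iff_of_pos_right hN]
    norm_cast
  have hK' : ∀ p p' : P, q p ≤ q p' + natDist N p'.1.1 p.1.1 ∧ natDist N p.1.1 p'.1.1 ≤ q p + q p' :=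
    fun p p' => by
      refine ⟨?_, ?_⟩ <;> simp only [← hcast, ← hq, ← dist_def]
      · rw [dist_comm]
        exact (hK _ p.2 _ p'.2).1
      · exact (hK _ p.2 _ p'.2).2
  obtain ⟨n, hn⟩ := exists_natDist_eq_of_finset (P := Finset.univ) (c := fun p : P => p.1.1)
    (q := q) (fun p _ => ⟨Nat.one_le_iff_ne_zero.mpr fun h => h0 p p.2 (by simp [hq p, h]), hqN p⟩)
    (fun p _ p' _ => hK' p p')
  refine ⟨show UrysohnSphereM N from n, fun p hp => ?_⟩
  rw [dist_def, hn ⟨p, hp⟩ (Finset.mem_univ _), hq ⟨p, hp⟩]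

theorem isUrysohnSphereM : IsUrysohnSphereM N (UrysohnSphereM N) :=
  ⟨inferInstance, hasExtensionProperty.isUltrahomogeneous dist_mem_distSetM, dist_mem_distSetM,
    fun _ _ _ hY => hasExtensionProperty.exists_isometry hY⟩

end UrysohnSphereM

namespace IsUrysohnSphereM

variable {N : ℕ} {S : Type} [MetricSpace S]

theorem exists_dist_eq (hS : IsUrysohnSphereM N S) {Y : Type} [Countable Y] (d : Y → Y → ℝ)
    (hself : ∀ x, d x x = 0) (hcomm : ∀ x y, d x y = d y x)
    (htri : ∀ x y z, d x z ≤ d x y + d y z) (hzero : ∀ x y, d x y = 0 → x = y)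
    (hD : ∀ x y, d x y ∈ distSetM N) : ∃ f : Y → S, ∀ x y, dist (f x) (f y) = d x y := by
  let _ : MetricSpace Y :=
    { dist := d
      dist_self := hself
      dist_comm := hcomm
      dist_triangle := htri
      eq_of_dist_eq_zero := hzero _ _ }
  obtain ⟨f, hf⟩ := hS.2.2.2 Y ‹_› hD
  exact ⟨f, hf.dist_eq⟩

theorem exists_dist_eq_comp (hS : IsUrysohnSphereM N S) {Y : Type} [MetricSpace Y] [Countable Y]
    (ρ : ℝ → ℝ) (hρ₀ : ρ 0 = 0) (hρpos : ∀ t, 0 < t → 0 < ρ t) (hρmono : Monotone ρ)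
    (hρadd : ∀ s t, ρ (s + t) ≤ ρ s + ρ t) (hD : ∀ x y : Y, ρ (dist x y) ∈ distSetM N) :
    ∃ f : Y → S, ∀ x y, dist (f x) (f y) = ρ (dist x y) :=
  hS.exists_dist_eq (fun x y => ρ (dist x y)) (by simp [hρ₀]) (by simp [dist_comm])
    (fun x y z => (hρmono (dist_triangle x y z)).trans (hρadd _ _))
    (fun x y h => by_contra fun hxy => (hρpos _ (dist_pos.mpr hxy)).ne' h) hD

end IsUrysohnSphereM

noncomputable def snapDist (m : ℕ) (t : ℝ) : ℝ :=
  (min m ⌈t * (2 * ((m : ℝ) ^ 2 + m)) / (2 * m + 3)⌉₊ : ℕ) / m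

section SnapDist

variable {m : ℕ}

theorem snapDist_zero : snapDist m 0 = 0 := by simp [snapDist]

theorem snapDist_pos (hm : 0 < m) {t : ℝ} (ht : 0 < t) : 0 < snapDist m t := by
  unfold snapDist
  have : 0 < ⌈t * (2 * ((m : ℝ) ^ 2 + m)) / (2 * m + 3)⌉₊ := Nat.ceil_pos.mpr (by positivity)
  have : 0 < min m ⌈t * (2 * ((m : ℝ) ^ 2 + m)) / (2 * m + 3)⌉₊ := lt_min hm this
  positivity

theorem snapDist_mono : Monotone (snapDist m) := fun _ _ _ => by
  unfold snapDist
  gcongr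

theorem snapDist_add_le (s t : ℝ) : snapDist m (s + t) ≤ snapDist m s + snapDist m t := by
  have := Nat.ceil_add_le (s * (2 * ((m : ℝ) ^ 2 + m)) / (2 * m + 3))
    (t * (2 * ((m : ℝ) ^ 2 + m)) / (2 * m + 3))
  rw [← add_div, ← add_mul] at this
  unfold snapDist
  rw [← add_div, ← Nat.cast_add]
  gcongr
  omega

theorem snapDist_mem_distSetM (t : ℝ) : snapDist m t ∈ distSetM m :=
  ⟨_, min_le_left _ _, rfl⟩

theorem snapDist_eq {k : ℕ} (hk : 1 ≤ k) (hkm : k ≤ m) {t : ℝ}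
    (ht : |t - (2 * m + 1) / (2 * (m + 1)) * (k / m)| ≤ 2 / (2 * ((m : ℝ) ^ 2 + m))) :
    snapDist m t = k / m := by
  have hm : (0 : ℝ) < m := by exact_mod_cast (by omega : 0 < m)
  have hk' : (1 : ℝ) ≤ k := by exact_mod_cast hk
  have hkm' : (k : ℝ) ≤ m := by exact_mod_cast hkm
  set M : ℝ := 2 * ((m : ℝ) ^ 2 + m) with hM
  have hMpos : 0 < M := by positivity
  have hcenter : (2 * m + 1) / (2 * (m + 1)) * (k / m) * M = k * (2 * m + 1) := by
    rw [hM]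
    field_simp
  rw [abs_le] at ht
  have hlo := mul_le_mul_of_nonneg_right ht.1 hMpos.le
  have hhi := mul_le_mul_of_nonneg_right ht.2 hMpos.le
  simp only [neg_mul, div_mul_cancel₀ _ hMpos.ne', sub_mul, hcenter] at hlo hhi
  have hceil : ⌈t * M / (2 * m + 3)⌉₊ = k := by
    rw [Nat.ceil_eq_iff (by omega), Nat.cast_sub hk, Nat.cast_one, lt_div_iff₀ (by positivity),
      div_le_iff₀ (by positivity)]
    constructor <;> nlinarith
  rw [snapDist, hceil, min_eq_right hkm]

end SnapDist

theorem IsUrysohnSphereM.exists_dist_eq_mul {m : ℕ} {S T : Type} [MetricSpace S] [MetricSpace T]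
    (hS : IsUrysohnSphereM m S) (hT : IsUrysohnSphereM (2 * (m ^ 2 + m)) T) :
    ∃ f : S → T, ∀ x y, dist (f x) (f y) = (2 * m + 1) / (2 * (m + 1)) * dist x y := by
  have := hS.1
  have hc : (0 : ℝ) < (2 * m + 1) / (2 * (m + 1)) := by positivity
  refine hT.exists_dist_eq_comp (fun t => (2 * m + 1) / (2 * (m + 1)) * t) (mul_zero _)
    (fun _ => mul_pos hc) (fun _ _ h => mul_le_mul_of_nonneg_left h hc.le)
    (fun _ _ => (mul_add _ _ _).le) fun x y => ?_
  obtain ⟨k, hkm, hxy⟩ := hS.2.2.1 x y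
  refine ⟨k * (2 * m + 1), by nlinarith, ?_⟩
  rw [hxy]
  push_cast
  field_simp

theorem IsUrysohnSphereM.epsIndivisible_zero {m : ℕ} (hm : 0 < m) {S T : Type} [MetricSpace S]
    [MetricSpace T] (hS : IsUrysohnSphereM m S) (hT : IsUrysohnSphereM (2 * (m ^ 2 + m)) T)
    (hTε : EpsIndivisible T (1 / (2 * ((m : ℝ) ^ 2 + m)))) : EpsIndivisible S 0 := by
  have := hT.1
  obtain ⟨f, hf⟩ := hS.exists_dist_eq_mul hT
  obtain ⟨g, hg⟩ := hS.exists_dist_eq_comp (Y := T) (snapDist m) snapDist_zero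
    (fun _ => snapDist_pos hm) snapDist_mono snapDist_add_le fun _ _ => snapDist_mem_distSetM _
  intro n hn χ
  obtain ⟨i, e, he, hclose⟩ := hTε n hn (χ ∘ g)
  choose t htχ htd using fun z => hclose (f z)
  refine ⟨i, g ∘ t, Isometry.of_dist_eq fun z w => ?_, fun z => ⟨g (t z), htχ z, dist_self _ |>.le⟩⟩
  rcases eq_or_ne z w with rfl | hzw
  · simp
  obtain ⟨k, hkm, hzw'⟩ := hS.2.2.1 z w
  have hk : 1 ≤ k := Nat.one_le_iff_ne_zero.mpr fun h => hzw (dist_eq_zero.mp (by simp [hzw', h]))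
  rw [Function.comp_apply, Function.comp_apply, hg, hzw']
  refine snapDist_eq hk hkm ?_
  rw [← hzw', ← hf z w, ← he.dist_eq (f z) (f w), ← Real.dist_eq]
  calc dist (dist (t z) (t w)) (dist (e (f z)) (e (f w)))
      ≤ dist (t z) (e (f z)) + dist (t w) (e (f w)) := dist_dist_dist_le _ _ _ _
    _ ≤ 1 / (2 * ((m : ℝ) ^ 2 + m)) + 1 / (2 * ((m : ℝ) ^ 2 + m)) := by
      rw [dist_comm (t z), dist_comm (t w)]
      exact add_le_add (htd z) (htd w)
    _ = 2 / (2 * ((m : ℝ) ^ 2 + m)) := by ring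

/-- If `S_{2(m²+m)}` is `1/(2(m²+m))`-indivisible, then `S_m` is indivisible. -/
theorem stmt9 (m : ℕ) (hm : 0 < m)
    (h : ∀ (T : Type) [MetricSpace T], IsUrysohnSphereM (2 * (m^2 + m)) T →
      EpsIndivisible T (1 / (2 * ((m : ℝ)^2 + m))))
    (Sm : Type) [MetricSpace Sm] (hSm : IsUrysohnSphereM m Sm) :
    EpsIndivisible Sm 0 := by
  have : NeZero (2 * (m ^ 2 + m)) := ⟨by positivity⟩
  exact hSm.epsIndivisible_zero hm UrysohnSphereM.isUrysohnSphereM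
    (h _ UrysohnSphereM.isUrysohnSphereM)
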